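/- The truncated Karhunen–Loève expansion is optimal among rank-k linear approximations: for C symmetric PSD with eigenvalues λ_1 ≥ ... ≥ λ_n and orthonormal eigenvectors V_i, and any orthonormal vectors W_1,...,W_k, the projection error satisfies E‖ψ − P_W ψ‖² ≥ Σ_{i=k+1}^n λ_i, with equality when W_i = V_i. -/
import Mathlib


open Finset Matrix

lemma aux_col {n : ℕ} (V : Fin n → Fin n → ℝ)
    (hVorth : ∀ i j, ∑ m, V i m * V j m = if i = j then (1 : ℝ) else 0) :
    ∀ a b, ∑ i, V i a * V i b = if a = b then (1:ℝ) else 0 := by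
  have h1 : (Matrix.of V) * (Matrix.of V)ᵀ = 1 := by
    ext i j
    simp [Matrix.mul_apply, Matrix.one_apply, hVorth]
  have h2 : (Matrix.of V)ᵀ * (Matrix.of V) = 1 := mul_eq_one_comm.mp h1
  intro a b
  have := congrArg (fun M => M a b) h2
  simpa [Matrix.mul_apply, Matrix.one_apply] using this

lemma aux_filter_lt {n k : ℕ} (hk : k ≤ n) (f : Fin n → ℝ) :
    ∑ j ∈ univ.filter (fun j : Fin n => (j:ℕ) < k), f j = ∑ i : Fin k, f (Fin.castLE hk i) := by
  refine Finset.sum_bij' (fun (a : Fin n) (ha : a ∈ univ.filter (fun j : Fin n => (j:ℕ) < k)) =>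
      (⟨a, (Finset.mem_filter.mp ha).2⟩ : Fin k))
    (fun (b : Fin k) _ => Fin.castLE hk b) ?_ ?_ ?_ ?_ ?_
  · intros; simp
  · intro b hb
    simp only [Finset.mem_filter, Finset.mem_univ, true_and]
    exact b.2
  · intro a ha; rfl
  · intro b hb; rfl
  · intro a ha; rfl

lemma aux_proj_le {n k : ℕ} (W : Fin k → Fin n → ℝ)
    (hW : ∀ i j, ∑ m, W i m * W j m = if i = j then (1:ℝ) else 0)
    (v : Fin n → ℝ) :
    ∑ i, (∑ m, v m * W i m)^2 ≤ ∑ m, v m ^2 := by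
  set α : Fin k → ℝ := fun i => ∑ m, v m * W i m with hα
  have e2 : ∑ m, v m * ∑ i, α i * W i m = ∑ i, α i ^2 := by
    simp_rw [Finset.mul_sum]
    rw [Finset.sum_comm]
    refine Finset.sum_congr rfl fun i _ => ?_
    simp_rw [show ∀ m, v m * (α i * W i m) = α i * (v m * W i m) from fun m => by ring,
      ← Finset.mul_sum]
    rw [pow_two]
  have e3 : ∑ m, (∑ i, α i * W i m)^2 = ∑ i, α i ^2 := by
    simp_rw [pow_two, Finset.sum_mul_sum]
    rw [Finset.sum_comm]
    have : ∀ i, ∑ m, ∑ i', (α i * W i m) * (α i' * W i' m)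
        = α i ^ 2 := by
      intro i
      rw [Finset.sum_comm]
      have : ∀ i', ∑ m, (α i * W i m) * (α i' * W i' m) = α i * α i' * ∑ m, W i m * W i' m := by
        intro i'
        rw [Finset.mul_sum]
        exact Finset.sum_congr rfl fun m _ => by ring
      simp_rw [this, hW]
      simp [pow_two]
    simp_rw [this]
    simp [pow_two]
  have h0 : 0 ≤ ∑ m, (v m - ∑ i, α i * W i m)^2 :=
    Finset.sum_nonneg fun m _ => sq_nonneg _
  have key : ∑ m, (v m - ∑ i, α i * W i m)^2
      = (∑ m, v m ^2) - ∑ i, α i ^2 := by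
    simp_rw [sub_sq]
    rw [Finset.sum_add_distrib, Finset.sum_sub_distrib]
    simp_rw [mul_assoc]
    rw [← Finset.mul_sum, e2, e3]
    ring
  rw [key] at h0
  linarith

lemma aux_quad {n : ℕ} (lam : Fin n → ℝ) (V : Fin n → Fin n → ℝ)
    (C : Matrix (Fin n) (Fin n) ℝ)
    (hC : ∀ a b, C a b = ∑ i, lam i * V i a * V i b) (u : Fin n → ℝ) :
    ∑ a, ∑ b, u a * C a b * u b = ∑ j, lam j * (∑ a, V j a * u a)^2 := by
  simp_rw [hC, Finset.mul_sum, Finset.sum_mul]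
  have h1 : ∀ a : Fin n, ∑ b : Fin n, ∑ j : Fin n, u a * (lam j * V j a * V j b) * u b
      = ∑ j : Fin n, ∑ b : Fin n, u a * (lam j * V j a * V j b) * u b :=
    fun a => Finset.sum_comm
  simp_rw [h1]
  rw [Finset.sum_comm]
  refine Finset.sum_congr rfl fun j _ => ?_
  have h2 : ∀ a, ∑ b, u a * (lam j * V j a * V j b) * u b
      = (lam j * (V j a * u a)) * ∑ b, V j b * u b := by
    intro a
    rw [Finset.mul_sum]
    exact Finset.sum_congr rfl fun b _ => by ring
  simp_rw [h2, ← Finset.sum_mul, ← Finset.mul_sum, pow_two]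
  ring

lemma aux_expand {n : ℕ} (V : Fin n → Fin n → ℝ)
    (hVcol : ∀ a b, ∑ i, V i a * V i b = if a = b then (1:ℝ) else 0)
    (w : Fin n → ℝ) :
    ∑ j, (∑ m, V j m * w m)^2 = ∑ m, w m ^2 := by
  simp_rw [pow_two, Finset.sum_mul_sum]
  rw [Finset.sum_comm]
  refine Finset.sum_congr rfl fun m _ => ?_
  rw [Finset.sum_comm]
  have h : ∀ m', ∑ j, (V j m * w m) * (V j m' * w m')
      = (w m * w m') * ∑ j, V j m * V j m' := by
    intro m'; rw [Finset.mul_sum]; exact Finset.sum_congr rfl fun j _ => by ring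
  simp_rw [h, hVcol]
  simp

/-- Optimality of the truncated Karhunen–Loève expansion among
rank-`k` linear approximations. For `C = ∑ λ_i V_i V_iᵀ` symmetric PSD with
ordered eigenvalues `λ_1 ≥ … ≥ λ_n ≥ 0` and orthonormal eigenvectors `V_i`,
and any orthonormal `W_1, …, W_k`, the projection error
`E‖ψ − P_W ψ‖² = tr(C) − ∑_{i=1}^k W_iᵀ C W_i` satisfies
`tr(C) − ∑_{i=1}^k W_iᵀ C W_i ≥ ∑_{i=k+1}^n λ_i`, with equality when
`W_i = V_i`. -/
theorem kle_optimality
    (n k : ℕ) (hk : k ≤ n)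
    (lam : Fin n → ℝ) (hnn : ∀ i, 0 ≤ lam i)
    (hord : ∀ i j : Fin n, i ≤ j → lam j ≤ lam i)
    (V : Fin n → Fin n → ℝ)
    (hVorth : ∀ i j, ∑ m, V i m * V j m = if i = j then (1 : ℝ) else 0)
    (C : Matrix (Fin n) (Fin n) ℝ)
    (hC : ∀ a b, C a b = ∑ i, lam i * V i a * V i b) :
    (∀ W : Fin k → Fin n → ℝ,
      (∀ i j, ∑ m, W i m * W j m = if i = j then (1 : ℝ) else 0) →
      ∑ i ∈ Finset.univ.filter (fun i : Fin n => k ≤ (i : ℕ)), lam i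
        ≤ (∑ a, C a a) - ∑ i : Fin k, ∑ a, ∑ b, W i a * C a b * W i b) ∧
    ((∑ a, C a a) - ∑ i : Fin k, ∑ a, ∑ b,
        V (Fin.castLE hk i) a * C a b * V (Fin.castLE hk i) b
      = ∑ i ∈ Finset.univ.filter (fun i : Fin n => k ≤ (i : ℕ)), lam i) := by
  have hVcol := aux_col V hVorth
  set A := Finset.univ.filter (fun j : Fin n => (j:ℕ) < k) with hA
  set B := Finset.univ.filter (fun j : Fin n => k ≤ (j:ℕ)) with hB
  have hsplit : ∀ f : Fin n → ℝ, ∑ j ∈ A, f j + ∑ j ∈ B, f j = ∑ j, f j := by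
    intro f
    rw [← Finset.sum_filter_add_sum_filter_not Finset.univ (fun j : Fin n => (j:ℕ) < k) f]
    congr 1
    apply Finset.sum_congr ?_ (fun _ _ => rfl)
    ext j; simp [hB, not_lt]
  have htr : ∑ a, C a a = ∑ j, lam j := by
    simp_rw [hC]
    rw [Finset.sum_comm]
    refine Finset.sum_congr rfl fun j _ => ?_
    simp_rw [mul_assoc, ← Finset.mul_sum, hVorth j j]
    simp
  have hA1 : ∑ _j ∈ A, (1:ℝ) = k := by
    rw [hA, aux_filter_lt hk (fun _ => (1:ℝ))]; simp
  constructor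
  · intro W hW
    set c : Fin n → ℝ := fun j => ∑ i : Fin k, (∑ a, V j a * W i a)^2 with hc
    have h1 : ∑ i : Fin k, ∑ a, ∑ b, W i a * C a b * W i b = ∑ j, lam j * c j := by
      have hq := fun i => aux_quad lam V C hC (W i)
      simp_rw [hq]
      rw [Finset.sum_comm]
      exact Finset.sum_congr rfl fun j _ => by rw [hc, ← Finset.mul_sum]
    have hcnn : ∀ j, 0 ≤ c j := fun j => Finset.sum_nonneg fun i _ => sq_nonneg _
    have hcle : ∀ j, c j ≤ 1 := by
      intro j
      have := aux_proj_le W hW (V j)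
      have h2 : ∑ m, V j m ^2 = 1 := by
        simp_rw [pow_two]; rw [hVorth j j]; simp
      rw [h2] at this
      exact this
    have hcsum : ∑ j, c j = k := by
      rw [hc]
      rw [Finset.sum_comm]
      have : ∀ i : Fin k, ∑ j, (∑ a, V j a * W i a)^2 = 1 := by
        intro i
        rw [aux_expand V hVcol (W i)]
        simp_rw [pow_two]; rw [hW i i]; simp
      simp_rw [this]
      simp
    set t : ℝ := if h : k < n then lam ⟨k, h⟩ else 0 with ht
    have htA : ∀ j ∈ A, t ≤ lam j := by
      intro j hj
      have hjk : (j:ℕ) < k := (Finset.mem_filter.mp hj).2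
      by_cases h : k < n
      · rw [ht, dif_pos h]
        exact hord j ⟨k, h⟩ (le_of_lt hjk)
      · rw [ht, dif_neg h]
        exact hnn j
    have htB : ∀ j ∈ B, lam j ≤ t := by
      intro j hj
      have hkj : k ≤ (j:ℕ) := (Finset.mem_filter.mp hj).2
      have h : k < n := lt_of_le_of_lt hkj j.isLt
      rw [ht, dif_pos h]
      exact hord ⟨k, h⟩ j hkj
    have hAc_Bc : ∑ j ∈ A, (1 - c j) = ∑ j ∈ B, c j := by
      rw [Finset.sum_sub_distrib, hA1]
      have := hsplit c
      linarith [hcsum]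
    have step1 : ∑ j ∈ B, lam j * c j ≤ t * ∑ j ∈ B, c j := by
      rw [Finset.mul_sum]
      exact Finset.sum_le_sum fun j hj =>
        mul_le_mul_of_nonneg_right (htB j hj) (hcnn j)
    have step2 : t * ∑ j ∈ A, (1 - c j) ≤ ∑ j ∈ A, lam j * (1 - c j) := by
      rw [Finset.mul_sum]
      exact Finset.sum_le_sum fun j hj =>
        mul_le_mul_of_nonneg_right (htA j hj) (by linarith [hcle j])
    have key : ∑ j ∈ B, lam j * c j ≤ ∑ j ∈ A, lam j * (1 - c j) := by
      rw [hAc_Bc] at step2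
      linarith
    have e5 : ∑ j ∈ A, lam j * (1 - c j) = ∑ j ∈ A, lam j - ∑ j ∈ A, lam j * c j := by
      rw [← Finset.sum_sub_distrib]
      exact Finset.sum_congr rfl fun j _ => by ring
    rw [htr, h1]
    have hs1 := hsplit lam
    have hs2 := hsplit (fun j => lam j * c j)
    linarith
  · have hq : ∀ i : Fin k, ∑ a, ∑ b,
        V (Fin.castLE hk i) a * C a b * V (Fin.castLE hk i) b = lam (Fin.castLE hk i) := by
      intro i
      rw [aux_quad lam V C hC]
      simp_rw [hVorth]
      simp
    simp_rw [hq]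
    rw [htr, ← aux_filter_lt hk lam]
    have := hsplit lam
    linarith
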